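/- (Theorem 3, authorized case, rank form.) Suppose Γ is self-dual. If A ⊆ B ⊆ P with A ∈ Γ and B ∈ Γ, then rk(M_A) + rk(M_{P∖A}) ≥ rk(M_B) + rk(M_{P∖B}), where rk denotes rank over F_q. (By the entropy formula S(X) = (rk(M_X) + rk(M_{P∖X}) − rk(M))·log₂ q + S(S) for authorized X, this expresses that the von Neumann entropy of the shares of authorized sets of the normal-form quantum secret sharing scheme is monotonically nonincreasing: S(A) ≥ S(B).) -/

import Mathlib

/-!
Normal-form monotone span programs (Smith's construction for quantum secret sharing).

Players are `Fin n`.  The minimal authorized sets are `A 0, …, A (k-1)`,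
distinct nonempty subsets forming an antichain whose union is all of `Fin n`.
`enum i` fixes an enumeration of the elements of `A i`; the last element
`enum i ⟨card - 1⟩` plays the role of the distinguished participant of block `i`.
-/

/-- The combinatorial data of a normal-form monotone span program. -/
structure MSP (n k : ℕ) where
  /-- the minimal authorized sets -/
  A : Fin k → Finset (Fin n)
  nonempty : ∀ i, (A i).Nonempty
  /-- antichain (this also forces the `A i` to be pairwise distinct) -/
  antichain : ∀ i j : Fin k, i ≠ j → ¬ A i ⊆ A j
  /-- every player occurs in some minimal authorized set -/
  cover : ∀ p : Fin n, ∃ i, p ∈ A i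
  /-- a fixed enumeration `p_{i,1}, …, p_{i,|A_i|}` of each `A i` -/
  enum : ∀ i, Fin ((A i).card) ≃ {p : Fin n // p ∈ A i}

namespace MSP

variable {n k : ℕ}

/-- Row indices of the span matrix: block `i` has `|A i|` rows. -/
abbrev Rows (S : MSP n k) := (i : Fin k) × Fin ((S.A i).card)

/-- Column indices: the first column (`none`) together with the blocks
`C i` of `r_i = |A i| - 1` columns (`some ⟨i, j⟩`). -/
abbrev Cols (S : MSP n k) := Option ((i : Fin k) × Fin ((S.A i).card - 1))

/-- The player labelling the rows (the map `ψ`). -/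
def label (S : MSP n k) (r : S.Rows) : Fin n := (S.enum r.1 r.2 : Fin n)

/-- The normal-form span matrix `M`.  In block `i`, row `j` with
`j < |A i| - 1` is the `j`-th identity row (a single `1` in column
`some ⟨i, j⟩`), and the last row (`j = |A i| - 1`) is
`(1, 0, …, 0, -1, …, -1)`: a `1` in column `none` and `-1` in every
column of block `i`. -/
def M (F : Type*) [Field F] (S : MSP n k) : Matrix S.Rows S.Cols F :=
  Matrix.of fun r c =>
    match c with
    | none => if (r.2 : ℕ) = (S.A r.1).card - 1 then 1 else 0
    | some ⟨i, j⟩ =>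
        if i = r.1 then
          (if (r.2 : ℕ) = (S.A r.1).card - 1 then -1
           else if (j : ℕ) = (r.2 : ℕ) then 1 else 0)
        else 0

/-- The submatrix `M_B` of `M` consisting of all rows labelled by players in `B`. -/
def MSub (F : Type*) [Field F] (S : MSP n k) (B : Finset (Fin n)) :
    Matrix {r : S.Rows // S.label r ∈ B} S.Cols F :=
  Matrix.of fun r c => M F S r.1 c

/-- The vector `ε₁ = (1, 0, …, 0)`. -/
def eps1 (F : Type*) [Field F] (S : MSP n k) : S.Cols → F :=
  fun c => match c with
  | none => 1
  | some _ => 0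

/-- The access structure computed by the program:
`B` is authorized iff it contains some minimal authorized set. -/
def auth (S : MSP n k) (B : Finset (Fin n)) : Prop := ∃ i, S.A i ⊆ B

/-- Self-duality of the access structure. -/
def selfDual (S : MSP n k) : Prop :=
  ∀ X : Finset (Fin n), S.auth X ↔ ¬ S.auth (Finset.univ \ X)

end MSP

open MSP

/-- `f(X) = rk(M_X) + rk(M_{P∖X})`, the rank functional governing the entropy
of the normal-form secret sharing state. -/
noncomputable def MSP.rkPair (F : Type*) [Field F] {n k : ℕ} (S : MSP n k) (X : Finset (Fin n)) : ℕ :=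
  (MSub F S X).rank + (MSub F S (Finset.univ \ X)).rank

/-!
By self-duality `P ∖ A` is unauthorized, and the rows of `M` labelled by an unauthorized set `Z`
are linearly independent: the block-`i` columns of a vanishing combination of rows force its
coefficients to be constant on block `i`, and one row of block `i` lies outside `Z` because
`A_i ⊄ Z`. With `D = B ∖ A`, independence makes the rank additive on `P ∖ A = (P ∖ B) ∪ D`,
while `rk(M_B) ≤ rk(M_A) + rk(M_D)` by subadditivity.
-/

open Module Submodule Matrix

section SpanImage

variable {K V ι : Type*} [DivisionRing K] [AddCommGroup V] [Module K V] [FiniteDimensional K V]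

theorem finrank_span_image_union_le (v : ι → V) (s t : Set ι) :
    finrank K (span K (v '' (s ∪ t))) ≤
      finrank K (span K (v '' s)) + finrank K (span K (v '' t)) := by
  rw [Set.image_union, span_union]
  exact finrank_add_le_finrank_add_finrank _ _

theorem LinearIndepOn.finrank_span_image_union {v : ι → V} {s t : Set ι}
    (hv : LinearIndepOn K v (s ∪ t)) (hst : Disjoint s t) :
    finrank K (span K (v '' (s ∪ t))) =
      finrank K (span K (v '' s)) + finrank K (span K (v '' t)) := by
  have hspan := ((linearIndepOn_union_iff hst).mp hv).2.2
  rw [Set.image_union, span_union, ← finrank_sup_add_finrank_inf_eq, hspan.eq_bot, finrank_bot,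
    add_zero]

end SpanImage

namespace MSP

variable {n k : ℕ} (S : MSP n k)

/-- The row of block `i` with `1` in the first column. -/
def last (i : Fin k) : Fin (S.A i).card :=
  ⟨(S.A i).card - 1, Nat.sub_lt (S.nonempty i).card_pos one_pos⟩

variable {F : Type*} [Field F]

theorem M_apply_some (i : Fin k) (j : Fin ((S.A i).card - 1)) (r : S.Rows) :
    M F S r (some ⟨i, j⟩) =
      (if r = ⟨i, Fin.castLE (Nat.sub_le _ _) j⟩ then 1 else 0) -
        (if r = ⟨i, S.last i⟩ then 1 else 0) := by
  obtain ⟨i', j'⟩ := r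
  by_cases hi : i = i'
  · subst hi
    have hj := j.isLt
    simp only [M, last, of_apply, Sigma.mk.inj_iff, heq_eq_eq, true_and, if_true, Fin.ext_iff,
      Fin.val_castLE]
    split_ifs <;> first | omega | simp
  · simp [M, hi, Ne.symm hi]

theorem vecMul_M_apply_some (c : S.Rows → F) (i : Fin k) (j : Fin ((S.A i).card - 1)) :
    (c ᵥ* M F S) (some ⟨i, j⟩) =
      c ⟨i, Fin.castLE (Nat.sub_le _ _) j⟩ - c ⟨i, S.last i⟩ := by
  simp only [vecMul, dotProduct, M_apply_some, mul_sub, mul_ite, mul_one, mul_zero,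
    Finset.sum_sub_distrib, Finset.sum_ite_eq', Finset.mem_univ, if_true]

theorem apply_eq_apply_last_of_vecMul_M_eq_zero {c : S.Rows → F} (hc : c ᵥ* M F S = 0)
    (i : Fin k) (j : Fin (S.A i).card) : c ⟨i, j⟩ = c ⟨i, S.last i⟩ := by
  by_cases hj : (j : ℕ) = (S.A i).card - 1
  · rw [show j = S.last i from Fin.ext hj]
  · have hcol := S.vecMul_M_apply_some c i ⟨j, by omega⟩
    rw [hc, Pi.zero_apply, eq_comm, sub_eq_zero] at hcol
    exact hcol

theorem exists_label_notMem_of_not_auth {Z : Finset (Fin n)} (hZ : ¬ S.auth Z) (i : Fin k) :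
    ∃ j, S.label ⟨i, j⟩ ∉ Z := by
  obtain ⟨p, hpA, hpZ⟩ := Finset.not_subset.mp fun h => hZ ⟨i, h⟩
  exact ⟨(S.enum i).symm ⟨p, hpA⟩, by simpa [label] using hpZ⟩

theorem linearIndepOn_M_of_not_auth {Z : Finset (Fin n)} (hZ : ¬ S.auth Z) :
    LinearIndepOn F (M F S).row (S.label ⁻¹' Z) := by
  rw [linearIndepOn_iff]
  intro l hl hzero
  have hc : ⇑l ᵥ* M F S = 0 := by
    rw [← hzero, Finsupp.linearCombination_apply, Finsupp.sum_fintype _ _ (by simp),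
      vecMul_eq_sum]
    rfl
  ext ⟨i, j⟩
  obtain ⟨j₀, hj₀⟩ := S.exists_label_notMem_of_not_auth hZ i
  rw [S.apply_eq_apply_last_of_vecMul_M_eq_zero hc,
    ← S.apply_eq_apply_last_of_vecMul_M_eq_zero hc i j₀]
  exact Finsupp.notMem_support_iff.mp fun h => hj₀ (hl h)

theorem rank_MSub (X : Finset (Fin n)) :
    (MSub F S X).rank = finrank F (span F ((M F S).row '' (S.label ⁻¹' X))) := by
  rw [Matrix.rank_eq_finrank_span_row, Set.image_eq_range]
  rfl

theorem rank_MSub_union_le (X Y : Finset (Fin n)) :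
    (MSub F S (X ∪ Y)).rank ≤ (MSub F S X).rank + (MSub F S Y).rank := by
  rw [rank_MSub, rank_MSub, rank_MSub, Finset.coe_union, Set.preimage_union]
  exact finrank_span_image_union_le _ _ _

theorem rank_MSub_union_of_not_auth {X Y : Finset (Fin n)} (hXY : Disjoint X Y)
    (h : ¬ S.auth (X ∪ Y)) :
    (MSub F S (X ∪ Y)).rank = (MSub F S X).rank + (MSub F S Y).rank := by
  have hv := S.linearIndepOn_M_of_not_auth (F := F) h
  rw [Finset.coe_union, Set.preimage_union] at hv
  rw [rank_MSub, rank_MSub, rank_MSub, Finset.coe_union, Set.preimage_union]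
  exact hv.finrank_span_image_union ((Finset.disjoint_coe.mpr hXY).preimage _)

end MSP

theorem entropy_antitone_authorized_general {F : Type*} [Field F] {n k : ℕ}
    (S : MSP n k) (hsd : S.selfDual) (A B : Finset (Fin n)) (hAB : A ⊆ B)
    (hA : S.auth A) :
    S.rkPair F B ≤ S.rkPair F A := by
  have hB : A ∪ (B \ A) = B := Finset.union_sdiff_of_subset hAB
  have hAc : (Finset.univ \ B) ∪ (B \ A) = Finset.univ \ A :=
    Finset.sdiff_union_sdiff_cancel (Finset.subset_univ B) hAB
  have hdisj : Disjoint (Finset.univ \ B) (B \ A) :=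
    disjoint_sdiff_self_left.mono_right Finset.sdiff_subset
  have hle := S.rank_MSub_union_le (F := F) A (B \ A)
  have heq := S.rank_MSub_union_of_not_auth (F := F) hdisj (hAc ▸ (hsd A).mp hA)
  rw [hB] at hle
  rw [hAc] at heq
  unfold rkPair
  omega

/-- Theorem 3, authorized case, rank form.  Suppose `Γ` is
self-dual.  If `A ⊆ B ⊆ P` are both authorized, then
`rk(M_A) + rk(M_{P∖A}) ≥ rk(M_B) + rk(M_{P∖B})`.  Via the entropy formula
`S(X) = (rk(M_X) + rk(M_{P∖X}) − rk M)·log₂ q + S(secret)` for authorized `X`,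
this says the von Neumann entropy of authorized sets is monotonically
nonincreasing. -/
theorem entropy_antitone_authorized {F : Type*} [Field F] [Fintype F] {n k : ℕ}
    (S : MSP n k) (hsd : S.selfDual) (A B : Finset (Fin n)) (hAB : A ⊆ B)
    (hA : S.auth A) (hB : S.auth B) :
    S.rkPair F B ≤ S.rkPair F A :=
  entropy_antitone_authorized_general S hsd A B hAB hA
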